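/- Let 0 ≤ L < 1 and ξ > 0. Define p* = sup{ p ∈ [0,1] : kl(L‖p) ≤ ξ }. Then p* = inf_{C>0} (1 - exp(-C·L - ξ)) / (1 - e^{-C}). -/

import Mathlib

/-- Binary KL divergence, extended-real valued: `kl(q‖1) = ⊤` for `q < 1`. -/
noncomputable def klBin (q p : ℝ) : EReal :=
  if q < 1 ∧ p = 1 then ⊤
  else ((q * Real.log (q / p) + (1 - q) * Real.log ((1 - q) / (1 - p)) : ℝ) : EReal)

/-!
Donsker–Varadhan for a Bernoulli variable: with `D = 1 - p + p e^{-C}` and the tilted parameter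
`s = p e^{-C} / D`, one has the identity `kl(L‖p) = -C L - log D + kl(L‖s)`. By Gibbs' inequality
`-C L - log D ≤ kl(L‖p)`, and `p` lies below the `C`-th bound exactly when `-C L - ξ ≤ log D`, so
every `p` with `kl(L‖p) ≤ ξ` lies below every bound. Conversely, a `p < 1` above the supremum has
`p > L` and `kl(L‖p) > ξ`; tilting `p` to some `s ∈ (0, p)` with `kl(L‖s) ≤ kl(L‖p) - ξ`
(`s = L`, or `s` near `0` when `L = 0`) yields a `C > 0` whose bound is `≤ p`.
-/

open Real

noncomputable def klReal (q p : ℝ) : ℝ :=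
  q * log (q / p) + (1 - q) * log ((1 - q) / (1 - p))

noncomputable def tilt (p C : ℝ) : ℝ :=
  p * exp (-C) / (1 - p + p * exp (-C))

noncomputable def catoniBound (L ξ C : ℝ) : ℝ :=
  (1 - exp (-C * L - ξ)) / (1 - exp (-C))

lemma klBin_le_coe_iff {q p ξ : ℝ} (hq : q < 1) :
    klBin q p ≤ (ξ : EReal) ↔ p ≠ 1 ∧ klReal q p ≤ ξ := by
  by_cases hp : p = 1
  · simp [klBin, hq, hp]
  · rw [klBin, if_neg (fun h => hp h.2), EReal.coe_le_coe_iff, klReal]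
    exact (and_iff_right hp).symm

lemma mul_log_div_eq (x : ℝ) {y : ℝ} (hy : y ≠ 0) : x * log (x / y) = x * log x - x * log y := by
  rcases eq_or_ne x 0 with rfl | hx
  · simp
  · rw [log_div hx hy, mul_sub]

lemma sub_le_mul_log_div {q s : ℝ} (hq : 0 ≤ q) (hs : 0 < s) : q - s ≤ q * log (q / s) := by
  have h := mul_nonneg hs.le (InformationTheory.klFun_nonneg (div_nonneg hq hs.le))
  have hqs : s * (q / s) = q := mul_div_cancel₀ q hs.ne'
  rw [InformationTheory.klFun_apply] at h
  linear_combination h + (log (q / s) - 1) * hqs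

lemma klReal_self (q : ℝ) : klReal q q = 0 := by
  simp [klReal]

lemma klReal_nonneg {q s : ℝ} (hq0 : 0 ≤ q) (hq1 : q ≤ 1) (hs0 : 0 < s) (hs1 : s < 1) :
    0 ≤ klReal q s := by
  have h := sub_le_mul_log_div hq0 hs0
  have h' := sub_le_mul_log_div (sub_nonneg.2 hq1) (sub_pos.2 hs1)
  unfold klReal
  linarith

lemma klReal_eq_add_klReal_tilt (L C : ℝ) {p : ℝ} (hp0 : 0 < p) (hp1 : p < 1) :
    klReal L p = -C * L - log (1 - p + p * exp (-C)) + klReal L (tilt p C) := by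
  set D := 1 - p + p * exp (-C)
  have hD : 0 < D := by have := exp_pos (-C); nlinarith
  have hs : log (tilt p C) = log p - C - log D := by
    rw [tilt, log_div (by positivity) hD.ne', log_mul hp0.ne' (exp_pos _).ne', log_exp]; ring
  have hs' : log (1 - tilt p C) = log (1 - p) - log D := by
    rw [tilt, one_sub_div hD.ne', show D - p * exp (-C) = 1 - p by ring,
      log_div (by linarith) hD.ne']
  have htilt0 : tilt p C ≠ 0 := by unfold tilt; positivity
  have htilt1 : 1 - tilt p C ≠ 0 := by
    rw [tilt, one_sub_div hD.ne', show D - p * exp (-C) = 1 - p by ring]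
    exact div_ne_zero (by linarith) hD.ne'
  simp only [klReal, mul_log_div_eq _ hp0.ne', mul_log_div_eq _ (sub_pos.2 hp1).ne',
    mul_log_div_eq _ htilt0, mul_log_div_eq _ htilt1, hs, hs']
  ring

lemma neg_mul_sub_log_le_klReal (C : ℝ) {L p : ℝ} (hL0 : 0 ≤ L) (hL1 : L ≤ 1)
    (hp0 : 0 < p) (hp1 : p < 1) : -C * L - log (1 - p + p * exp (-C)) ≤ klReal L p := by
  have htilt0 : 0 < tilt p C := by unfold tilt; have := exp_pos (-C); positivity
  have htilt1 : tilt p C < 1 := by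
    rw [tilt, div_lt_one (by have := exp_pos (-C); nlinarith)]; linarith
  rw [klReal_eq_add_klReal_tilt L C hp0 hp1]
  linarith [klReal_nonneg hL0 hL1 htilt0 htilt1]

lemma exists_tilt_eq {s p : ℝ} (hs0 : 0 < s) (hsp : s < p) (hp1 : p < 1) :
    ∃ C, 0 < C ∧ tilt p C = s := by
  have hp0 : 0 < p := hs0.trans hsp
  have hs1 : 0 < 1 - s := by linarith
  have hq1 : 0 < 1 - p := by linarith
  have ht0 : 0 < s * (1 - p) / (p * (1 - s)) := by positivity
  have ht1 : s * (1 - p) / (p * (1 - s)) < 1 := by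
    rw [div_lt_one (by positivity)]; nlinarith
  refine ⟨-log (s * (1 - p) / (p * (1 - s))), neg_pos.2 (log_neg ht0 ht1), ?_⟩
  rw [tilt, neg_neg, exp_log ht0]
  field_simp
  ring

lemma exists_klReal_le {L p δ : ℝ} (hL0 : 0 ≤ L) (hLp : L < p) (hδ : 0 < δ) :
    ∃ s, 0 < s ∧ s < p ∧ klReal L s ≤ δ := by
  rcases hL0.eq_or_lt with rfl | hL0
  · have hexp : exp (-δ) < 1 := exp_lt_one_iff.2 (neg_lt_zero.2 hδ)
    refine ⟨min (p / 2) (1 - exp (-δ)), lt_min (half_pos hLp) (sub_pos.2 hexp),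
      (min_le_left _ _).trans_lt (half_lt_self hLp), ?_⟩
    have hs : exp (-δ) ≤ 1 - min (p / 2) (1 - exp (-δ)) := by
      linarith [min_le_right (p / 2) (1 - exp (-δ))]
    rw [klReal, zero_mul, zero_add, sub_zero, one_mul, one_div, log_inv, neg_le]
    exact (le_log_iff_exp_le ((exp_pos _).trans_le hs)).2 hs
  · exact ⟨L, hL0, hLp, (klReal_self L).trans_le hδ.le⟩

lemma le_catoniBound_iff {L ξ C p : ℝ} (hC : 0 < C) :
    p ≤ catoniBound L ξ C ↔ exp (-C * L - ξ) ≤ 1 - p + p * exp (-C) := by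
  rw [catoniBound, le_div_iff₀ (sub_pos.2 (exp_lt_one_iff.2 (neg_lt_zero.2 hC)))]
  constructor <;> intro h <;> linarith

lemma catoniBound_le_iff {L ξ C p : ℝ} (hC : 0 < C) :
    catoniBound L ξ C ≤ p ↔ 1 - p + p * exp (-C) ≤ exp (-C * L - ξ) := by
  rw [catoniBound, div_le_iff₀ (sub_pos.2 (exp_lt_one_iff.2 (neg_lt_zero.2 hC)))]
  constructor <;> intro h <;> linarith

lemma catoniBound_div_one_sub {L ξ : ℝ} (hL1 : L < 1) (hξ : ξ ≠ 0) :
    catoniBound L ξ (ξ / (1 - L)) = 1 := by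
  have hL : 1 - L ≠ 0 := (sub_pos.2 hL1).ne'
  have hexp : -(ξ / (1 - L)) * L - ξ = -(ξ / (1 - L)) := by field_simp; ring
  rw [catoniBound, hexp, div_self]
  rw [sub_ne_zero, ne_comm, Ne, exp_eq_one_iff, neg_eq_zero]
  exact div_ne_zero hξ hL

lemma le_catoniBound_of_klReal_le {L ξ C p : ℝ} (hL0 : 0 ≤ L) (hL1 : L ≤ 1) (hξ : 0 ≤ ξ)
    (hC : 0 < C) (hp0 : 0 ≤ p) (hp1 : p < 1) (h : klReal L p ≤ ξ) :
    p ≤ catoniBound L ξ C := by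
  rw [le_catoniBound_iff hC]
  rcases hp0.eq_or_lt with rfl | hp0
  · simpa using exp_le_one_iff.2 (by nlinarith : -C * L - ξ ≤ 0)
  · have hD : 0 < 1 - p + p * exp (-C) := by have := exp_pos (-C); nlinarith
    rw [← le_log_iff_exp_le hD]
    linarith [neg_mul_sub_log_le_klReal C hL0 hL1 hp0 hp1]

lemma exists_catoniBound_le_of_lt_klReal {L ξ p : ℝ} (hL0 : 0 ≤ L) (hLp : L < p) (hp1 : p < 1)
    (h : ξ < klReal L p) : ∃ C, 0 < C ∧ catoniBound L ξ C ≤ p := by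
  obtain ⟨s, hs0, hsp, hs⟩ := exists_klReal_le hL0 hLp (sub_pos.2 h)
  obtain ⟨C, hC, rfl⟩ := exists_tilt_eq hs0 hsp hp1
  have hD : 0 < 1 - p + p * exp (-C) := by have := exp_pos (-C); nlinarith
  have hdv := klReal_eq_add_klReal_tilt L C (hs0.trans hsp) hp1
  refine ⟨C, hC, (catoniBound_le_iff hC).2 ((log_le_iff_le_exp hD).1 ?_)⟩
  linarith

/-- For `0 ≤ L < 1` and `ξ > 0`,
`sup{p ∈ [0,1] : kl(L‖p) ≤ ξ} = inf_{C>0} (1 - exp(-C L - ξ)) / (1 - e^{-C})`. -/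
theorem statement4 (L ξ : ℝ) (hL0 : 0 ≤ L) (hL1 : L < 1) (hξ : 0 < ξ) :
    sSup {p : ℝ | p ∈ Set.Icc (0 : ℝ) 1 ∧ klBin L p ≤ (ξ : EReal)}
      = sInf {y : ℝ | ∃ C : ℝ, 0 < C ∧
          y = (1 - Real.exp (-C * L - ξ)) / (1 - Real.exp (-C))} := by
  set A := {p : ℝ | p ∈ Set.Icc (0 : ℝ) 1 ∧ klBin L p ≤ (ξ : EReal)}
  set B := {y : ℝ | ∃ C : ℝ, 0 < C ∧ y = (1 - Real.exp (-C * L - ξ)) / (1 - Real.exp (-C))}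
  have hLA : L ∈ A :=
    ⟨⟨hL0, hL1.le⟩, (klBin_le_coe_iff hL1).2 ⟨hL1.ne, (klReal_self L).trans_le hξ.le⟩⟩
  have hA_le_B : ∀ p ∈ A, ∀ y ∈ B, p ≤ y := by
    rintro p ⟨⟨hp0, hp1⟩, hp⟩ y ⟨C, hC, rfl⟩
    obtain ⟨hp1', hkl⟩ := (klBin_le_coe_iff hL1).1 hp
    exact le_catoniBound_of_klReal_le hL0 hL1.le hξ.le hC hp0 (hp1.lt_of_ne hp1') hkl
  have hAbdd : BddAbove A := ⟨1, fun p hp => hp.1.2⟩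
  have hBbdd : BddBelow B := ⟨L, hA_le_B L hLA⟩
  have h1B : 1 ∈ B :=
    ⟨ξ / (1 - L), div_pos hξ (sub_pos.2 hL1), (catoniBound_div_one_sub hL1 hξ.ne').symm⟩
  refine le_antisymm
    (le_csInf ⟨1, h1B⟩ fun y hy => csSup_le ⟨L, hLA⟩ fun p hp => hA_le_B p hp y hy)
    (le_of_forall_gt_imp_ge_of_dense fun c hc => ?_)
  rcases le_or_gt 1 c with h1c | hc1
  · exact (csInf_le hBbdd h1B).trans h1c
  have hLc : L < c := (le_csSup hAbdd hLA).trans_lt hc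
  have hkl : ξ < klReal L c := by
    by_contra! h
    exact hc.not_ge
      (le_csSup hAbdd ⟨⟨hL0.trans hLc.le, hc1.le⟩, (klBin_le_coe_iff hL1).2 ⟨hc1.ne, h⟩⟩)
  obtain ⟨C, hC, hCc⟩ := exists_catoniBound_le_of_lt_klReal hL0 hLc hc1 hkl
  exact (csInf_le hBbdd ⟨C, hC, rfl⟩).trans hCc
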